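/- Lemma 3: Fix k ≥ 2. Let P be a rook placement on a Ferrers board F containing the pattern k…1, let D = D₁…D_k be the lexicographically value-smallest occurrence of k…1 in P, and let R = R(a,b) where a = col(D_k) and b = row(D₁). Then the restriction φ(P)_R of φ(P) to R contains no occurrence of k…1. -/
import Mathlib


open scoped Classical

/-- A cell (square) of the grid: `(column, row)`, both `≥ 1` for genuine cells. -/
abbrev Cell : Type := ℕ × ℕ

/-- The rectangle `R(a,b)` consisting of all cells `(i,j)` with `1 ≤ i ≤ a`, `1 ≤ j ≤ b`. -/
def Rect (a b : ℕ) : Finset Cell := Finset.Icc 1 a ×ˢ Finset.Icc 1 b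

/-- A Ferrers board (French notation): a down-left closed finite set of cells with
positive coordinates. -/
def IsFerrers (F : Finset Cell) : Prop :=
  ∀ p ∈ F, 1 ≤ p.1 ∧ 1 ≤ p.2 ∧
    ∀ q : Cell, 1 ≤ q.1 → 1 ≤ q.2 → q.1 ≤ p.1 → q.2 ≤ p.2 → q ∈ F

/-- A rook placement on a board `F`: a subset of `F` with at most one cell in each
column and at most one cell in each row. -/
def IsPlacement (F P : Finset Cell) : Prop :=
  P ⊆ F ∧ (∀ p ∈ P, ∀ q ∈ P, p.1 = q.1 → p = q) ∧
    (∀ p ∈ P, ∀ q ∈ P, p.2 = q.2 → p = q)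

/-- A decreasing sequence in `P`: columns strictly increase, rows strictly decrease. -/
def IsDecSeq (P : Finset Cell) (k : ℕ) (S : Fin k → Cell) : Prop :=
  (∀ i, S i ∈ P) ∧ ∀ i j : Fin k, i < j → (S i).1 < (S j).1 ∧ (S j).2 < (S i).2

/-- An increasing sequence in `P`: columns and rows both strictly increase. -/
def IsIncSeq (P : Finset Cell) (k : ℕ) (S : Fin k → Cell) : Prop :=
  (∀ i, S i ∈ P) ∧ ∀ i j : Fin k, i < j → (S i).1 < (S j).1 ∧ (S i).2 < (S j).2

/-- Lexicographic comparison of two sequences of cells by their rows (values),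
entry by entry from the left. -/
def rowLexLE (k : ℕ) (S T : Fin k → Cell) : Prop :=
  (∀ i, (S i).2 = (T i).2) ∨
    ∃ i : Fin k, (S i).2 < (T i).2 ∧ ∀ j : Fin k, j < i → (S j).2 = (T j).2

/-- An occurrence of the decreasing pattern `k…1` in the placement `P` on the board `F`:
a decreasing sequence of cells of `P`, all lying in a common rectangle contained in `F`. -/
def IsDecOcc (F P : Finset Cell) (k : ℕ) (D : Fin k → Cell) : Prop :=
  IsDecSeq P k D ∧ ∃ a b : ℕ, Rect a b ⊆ F ∧ ∀ i, D i ∈ Rect a b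

/-- `D` is the lexicographically value-smallest occurrence of `k…1` in `P`. -/
def IsMinOcc (F P : Finset Cell) (k : ℕ) (D : Fin k → Cell) : Prop :=
  IsDecOcc F P k D ∧ ∀ S : Fin k → Cell, IsDecOcc F P k S → rowLexLE k D S

/-- Cyclic successor on `Fin k`. -/
def cyc (k : ℕ) (i : Fin k) : Fin k :=
  ⟨(i.1 + 1) % k, Nat.mod_lt _ (Nat.lt_of_le_of_lt (Nat.zero_le _) i.isLt)⟩

/-- The action of `φ` on `P`, given the occurrence `D = D₁…D_k` of `k…1`: the columns of
`D₁,…,D_k` receive markers at the rows of `D₂,…,D_k,D₁` respectively; other cells are fixed. -/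
def phiStep (k : ℕ) (D : Fin k → Cell) (P : Finset Cell) : Finset Cell :=
  (P \ Finset.image D Finset.univ) ∪
    Finset.image (fun i : Fin k => ((D i).1, (D (cyc k i)).2)) Finset.univ

/-- Auxiliary gluing lemma: a decreasing prefix of `D`, followed by a decreasing
segment of a sequence `T`, followed by a decreasing suffix of `D`, yields an occurrence
that is lexicographically strictly smaller than `D`, contradicting minimality. -/
lemma seg_false (k : ℕ) (F P : Finset Cell) (a b : ℕ)
    (hRsub : Rect a b ⊆ F)
    (D : Fin k → Cell)
    (hmin : ∀ S : Fin k → Cell, IsDecOcc F P k S → rowLexLE k D S)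
    (DD : ℕ → Cell) (hDDeq : ∀ (i : ℕ) (h : i < k), DD i = D ⟨i, h⟩)
    (hDDP : ∀ i, i < k → DD i ∈ P ∧ DD i ∈ Rect a b)
    (hDDm : ∀ i1 i2, i1 < i2 → i2 < k → (DD i1).1 < (DD i2).1 ∧ (DD i2).2 < (DD i1).2)
    (T : ℕ → Cell) (u p q v : ℕ)
    (hu : u < k) (hpq : p ≤ q) (huv : u ≤ v) (hvk : v ≤ k)
    (hlen : v + p ≤ u + q + 1)
    (hTP : ∀ m, p ≤ m → m ≤ q → T m ∈ P ∧ T m ∈ Rect a b)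
    (hTdec : ∀ m, p ≤ m → m + 1 ≤ q → (T m).1 < (T (m+1)).1 ∧ (T (m+1)).2 < (T m).2)
    (hlink1 : ∀ m, m < u → (DD m).1 < (T p).1 ∧ (T p).2 < (DD m).2)
    (hlink2 : v < k → (T q).1 < (DD v).1 ∧ (DD v).2 < (T q).2)
    (hlex : (T p).2 < (DD u).2) : False := by
  have hDDle : ∀ i1 i2, i1 ≤ i2 → i2 < k → (DD i1).1 ≤ (DD i2).1 ∧ (DD i2).2 ≤ (DD i1).2 := by
    intro i1 i2 h hk2
    rcases Nat.eq_or_lt_of_le h with h' | h'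
    · subst h'; exact ⟨le_refl _, le_refl _⟩
    · exact ⟨le_of_lt (hDDm i1 i2 h' hk2).1, le_of_lt (hDDm i1 i2 h' hk2).2⟩
  have segmono : ∀ m2 m1, p ≤ m1 → m1 < m2 → m2 ≤ q →
      (T m1).1 < (T m2).1 ∧ (T m2).2 < (T m1).2 := by
    intro m2
    induction m2 with
    | zero => intro m1 _ h _; exact absurd h (Nat.not_lt_zero m1)
    | succ n ih =>
      intro m1 h1 h2 h3
      rcases Nat.lt_succ_iff_lt_or_eq.mp h2 with h4 | h4
      · have A := ih m1 h1 h4 (by omega)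
        have B := hTdec n (by omega) h3
        exact ⟨lt_trans A.1 B.1, lt_trans B.2 A.2⟩
      · subst h4; exact hTdec m1 h1 h3
  have segle : ∀ m1 m2, p ≤ m1 → m1 ≤ m2 → m2 ≤ q →
      (T m1).1 ≤ (T m2).1 ∧ (T m2).2 ≤ (T m1).2 := by
    intro m1 m2 h1 h2 h3
    rcases Nat.eq_or_lt_of_le h2 with h4 | h4
    · subst h4; exact ⟨le_refl _, le_refl _⟩
    · exact ⟨le_of_lt (segmono m2 m1 h1 h4 h3).1, le_of_lt (segmono m2 m1 h1 h4 h3).2⟩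
  set L := q + 1 - p with hL
  let U : Fin k → Cell := fun m =>
    if m.1 < u then DD m.1
    else if m.1 < u + L then T (p + (m.1 - u))
    else DD (v + (m.1 - (u + L)))
  have hUcase : ∀ m : Fin k,
      (m.1 < u ∧ U m = DD m.1) ∨
      (u ≤ m.1 ∧ m.1 < u + L ∧ U m = T (p + (m.1 - u))) ∨
      (u + L ≤ m.1 ∧ v + (m.1 - (u + L)) < k ∧ U m = DD (v + (m.1 - (u + L)))) := by
    intro m
    by_cases h1 : m.1 < u
    · refine Or.inl ⟨h1, ?_⟩
      show (if m.1 < u then DD m.1 else if m.1 < u + L then T (p + (m.1 - u))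
        else DD (v + (m.1 - (u + L)))) = DD m.1
      rw [if_pos h1]
    · by_cases h2 : m.1 < u + L
      · refine Or.inr (Or.inl ⟨by omega, h2, ?_⟩)
        show (if m.1 < u then DD m.1 else if m.1 < u + L then T (p + (m.1 - u))
          else DD (v + (m.1 - (u + L)))) = T (p + (m.1 - u))
        rw [if_neg h1, if_pos h2]
      · refine Or.inr (Or.inr ⟨by omega, ?_, ?_⟩)
        · have := m.isLt; omega
        · show (if m.1 < u then DD m.1 else if m.1 < u + L then T (p + (m.1 - u))
            else DD (v + (m.1 - (u + L)))) = DD (v + (m.1 - (u + L)))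
          rw [if_neg h1, if_neg h2]
  have hUP : ∀ m : Fin k, U m ∈ P := by
    intro m
    rcases hUcase m with ⟨h1, e⟩ | ⟨h1, h2, e⟩ | ⟨h1, h2, e⟩
    · rw [e]; exact (hDDP m.1 m.isLt).1
    · rw [e]; exact (hTP (p + (m.1 - u)) (by omega) (by omega)).1
    · rw [e]; exact (hDDP _ h2).1
  have hUrect : ∀ m : Fin k, U m ∈ Rect a b := by
    intro m
    rcases hUcase m with ⟨h1, e⟩ | ⟨h1, h2, e⟩ | ⟨h1, h2, e⟩
    · rw [e]; exact (hDDP m.1 m.isLt).2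
    · rw [e]; exact (hTP (p + (m.1 - u)) (by omega) (by omega)).2
    · rw [e]; exact (hDDP _ h2).2
  have hUmono : ∀ m1 m2 : Fin k, m1 < m2 →
      (U m1).1 < (U m2).1 ∧ (U m2).2 < (U m1).2 := by
    intro m1 m2 hlt
    have hlt' : m1.1 < m2.1 := Fin.lt_def.mp hlt
    have hm2k := m2.isLt
    have hm1k := m1.isLt
    rcases hUcase m1 with ⟨h1, e1⟩ | ⟨h1, h2, e1⟩ | ⟨h1, h2, e1⟩ <;>
      rcases hUcase m2 with ⟨g1, e2⟩ | ⟨g1, g2, e2⟩ | ⟨g1, g2, e2⟩ <;> rw [e1, e2]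
    · exact hDDm m1.1 m2.1 hlt' hm2k
    · have A := hlink1 m1.1 h1
      have B := segle p (p + (m2.1 - u)) (le_refl p) (by omega) (by omega)
      exact ⟨lt_of_lt_of_le A.1 B.1, lt_of_le_of_lt B.2 A.2⟩
    · exact hDDm m1.1 (v + (m2.1 - (u + L))) (by omega) g2
    · exact absurd hlt' (by omega)
    · exact segmono (p + (m2.1 - u)) (p + (m1.1 - u)) (by omega) (by omega) (by omega)
    · have hvklt : v < k := by omega
      have A := segle (p + (m1.1 - u)) q (by omega) (by omega) (le_refl q)
      have B := hlink2 hvklt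
      have C := hDDle v (v + (m2.1 - (u + L))) (by omega) g2
      exact ⟨lt_of_le_of_lt A.1 (lt_of_lt_of_le B.1 C.1),
             lt_of_le_of_lt C.2 (lt_of_lt_of_le B.2 A.2)⟩
    · exact absurd hlt' (by omega)
    · exact absurd hlt' (by omega)
    · exact hDDm _ _ (by omega) g2
  have hocc : IsDecOcc F P k U := ⟨⟨hUP, hUmono⟩, a, b, hRsub, hUrect⟩
  have hlexD := hmin U hocc
  have hUu2 : (U ⟨u, hu⟩).2 < (D ⟨u, hu⟩).2 := by
    have hval : (⟨u, hu⟩ : Fin k).1 = u := rfl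
    rcases hUcase ⟨u, hu⟩ with ⟨h1, e⟩ | ⟨h1, h2, e⟩ | ⟨h1, h2, e⟩
    · rw [hval] at h1; omega
    · rw [hval] at e
      rw [e]
      have hpp : p + (u - u) = p := by omega
      rw [hpp, ← hDDeq u hu]
      exact hlex
    · rw [hval] at h1; omega
  have hUeqD : ∀ m : Fin k, m.1 < u → (U m).2 = (D m).2 := by
    intro m hm
    rcases hUcase m with ⟨h1, e⟩ | ⟨h1, h2, e⟩ | ⟨h1, h2, e⟩
    · rw [e, hDDeq m.1 m.isLt]
    · omega
    · omega
  rcases hlexD with hall | ⟨i, hi1, hi2⟩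
  · have h1 := hall ⟨u, hu⟩
    omega
  · rcases lt_trichotomy i.1 u with h | h | h
    · have h1 := hUeqD i h
      omega
    · have hiu : i = ⟨u, hu⟩ := Fin.ext h
      rw [hiu] at hi1
      omega
    · have h1 := hi2 ⟨u, hu⟩ (Fin.lt_def.mpr h)
      omega

/-- **Lemma 3.** Fix `k ≥ 2`, let `D` be the value-smallest occurrence of `k…1` in the
placement `P` on the Ferrers board `F`, and let `R = R(a,b)` with `a = col(D_k)`,
`b = row(D₁)`. Then the restriction of `φ(P)` to `R` contains no occurrence of `k…1`. -/
theorem phi_restriction_avoids (k : ℕ) (hk : 2 ≤ k) (F P : Finset Cell)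
    (hF : IsFerrers F) (hP : IsPlacement F P)
    (D : Fin k → Cell) (hD : IsMinOcc F P k D)
    (a b : ℕ) (ha : a = (D ⟨k - 1, by omega⟩).1) (hb : b = (D ⟨0, by omega⟩).2) :
    ∀ S : Fin k → Cell, ¬ IsDecSeq (phiStep k D P ∩ Rect a b) k S := by
  intro S hS
  obtain ⟨hSmem, hSmono⟩ := hS
  obtain ⟨⟨⟨hDP, hDm⟩, a', b', hsub', hmem'⟩, hmin⟩ := hD
  have h0k : 0 < k := by omega
  have hk1 : k - 1 < k := by omega
  have hrectmem : ∀ (x : Cell) (a0 b0 : ℕ),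
      x ∈ Rect a0 b0 ↔ 1 ≤ x.1 ∧ x.1 ≤ a0 ∧ 1 ≤ x.2 ∧ x.2 ≤ b0 := by
    intro x a0 b0
    simp only [Rect, Finset.mem_product, Finset.mem_Icc]
    omega
  obtain ⟨DD, hDDeq⟩ : ∃ DD : ℕ → Cell, ∀ (i : ℕ) (h : i < k), DD i = D ⟨i, h⟩ :=
    ⟨fun i => if h : i < k then D ⟨i, h⟩ else (0, 0), fun i h => dif_pos h⟩
  have hDDm : ∀ i1 i2, i1 < i2 → i2 < k → (DD i1).1 < (DD i2).1 ∧ (DD i2).2 < (DD i1).2 := by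
    intro i1 i2 h hk2
    rw [hDDeq i1 (by omega), hDDeq i2 hk2]
    exact hDm ⟨i1, by omega⟩ ⟨i2, hk2⟩ (Fin.mk_lt_mk.mpr h)
  have hDDle : ∀ i1 i2, i1 ≤ i2 → i2 < k → (DD i1).1 ≤ (DD i2).1 ∧ (DD i2).2 ≤ (DD i1).2 := by
    intro i1 i2 h hk2
    rcases Nat.eq_or_lt_of_le h with h' | h'
    · subst h'; exact ⟨le_refl _, le_refl _⟩
    · exact ⟨le_of_lt (hDDm i1 i2 h' hk2).1, le_of_lt (hDDm i1 i2 h' hk2).2⟩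
  have ha2 : a = (DD (k-1)).1 := by rw [hDDeq (k-1) hk1]; exact ha
  have hb2 : b = (DD 0).2 := by rw [hDDeq 0 h0k]; exact hb
  have hDDrect : ∀ i, i < k → DD i ∈ Rect a b := by
    intro i hik
    have h1 := (hrectmem _ _ _).mp (hmem' ⟨i, hik⟩)
    have hcol := (hDDle i (k-1) (by omega) hk1).1
    have hrow := (hDDle 0 i (Nat.zero_le i) hik).2
    have hDDi : DD i = D ⟨i, hik⟩ := hDDeq i hik
    rw [hrectmem]
    refine ⟨?_, ?_, ?_, ?_⟩
    · rw [hDDi]; exact h1.1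
    · omega
    · rw [hDDi]; exact h1.2.2.1
    · omega
  have hDDP2 : ∀ i, i < k → DD i ∈ P ∧ DD i ∈ Rect a b := by
    intro i h
    exact ⟨by rw [hDDeq i h]; exact hDP _, hDDrect i h⟩
  have hSQ : ∀ j : Fin k, S j ∈ phiStep k D P := fun j => (Finset.mem_inter.mp (hSmem j)).1
  have hSrect : ∀ j : Fin k, S j ∈ Rect a b := fun j => (Finset.mem_inter.mp (hSmem j)).2
  have hRsub : Rect a b ⊆ F := by
    intro x hx
    apply hsub'
    rw [hrectmem] at hx ⊢
    have h1 := (hrectmem _ _ _).mp (hmem' ⟨k-1, hk1⟩)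
    have h2 := (hrectmem _ _ _).mp (hmem' ⟨0, h0k⟩)
    have h3 : a = (D ⟨k-1, hk1⟩).1 := ha
    have h4 : b = (D ⟨0, h0k⟩).2 := hb
    omega
  have hclass : ∀ j : Fin k,
      (S j ∈ P ∧ (∀ i, i < k → (S j).1 ≠ (DD i).1) ∧ (∀ i, i < k → (S j).2 ≠ (DD i).2)) ∨
      (∃ i, i + 1 < k ∧ S j = ((DD i).1, (DD (i+1)).2)) := by
    intro j
    have hj : S j ∈ (P \ Finset.image D Finset.univ) ∪
        Finset.image (fun i : Fin k => ((D i).1, (D (cyc k i)).2)) Finset.univ := hSQ j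
    rw [Finset.mem_union] at hj
    rcases hj with hj | hj
    · rw [Finset.mem_sdiff] at hj
      obtain ⟨hp, hnd⟩ := hj
      left
      refine ⟨hp, ?_, ?_⟩
      · intro i hik heq
        rw [hDDeq i hik] at heq
        exact hnd (Finset.mem_image.mpr ⟨⟨i, hik⟩, Finset.mem_univ _,
          (hP.2.1 (D ⟨i, hik⟩) (hDP _) (S j) hp heq.symm)⟩)
      · intro i hik heq
        rw [hDDeq i hik] at heq
        exact hnd (Finset.mem_image.mpr ⟨⟨i, hik⟩, Finset.mem_univ _,
          (hP.2.2 (D ⟨i, hik⟩) (hDP _) (S j) hp heq.symm)⟩)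
    · rw [Finset.mem_image] at hj
      obtain ⟨i, _, heq⟩ := hj
      by_cases hik : i.1 + 1 < k
      · right
        refine ⟨i.1, hik, ?_⟩
        have hcyc : cyc k i = ⟨i.1 + 1, hik⟩ := by
          unfold cyc
          exact Fin.ext (Nat.mod_eq_of_lt hik)
        rw [← heq, hcyc, hDDeq i.1 (by omega), hDDeq (i.1+1) hik]
      · exfalso
        have hival : i.1 + 1 = k := by have := i.isLt; omega
        have hcyc : cyc k i = ⟨0, h0k⟩ := by
          unfold cyc
          apply Fin.ext
          show (i.1 + 1) % k = 0
          rw [hival, Nat.mod_self]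
        have hieq : i = ⟨k-1, hk1⟩ := Fin.ext (show i.1 = k - 1 by omega)
        have hcol : (S j).1 = (D ⟨k-1, hk1⟩).1 := by rw [← heq, hieq]
        have hrow : (S j).2 = (D ⟨0, h0k⟩).2 := by rw [← heq, hcyc]
        have h3 : a = (D ⟨k-1, hk1⟩).1 := ha
        have h4 : b = (D ⟨0, h0k⟩).2 := hb
        rcases Nat.lt_or_ge j.1 (k-1) with hj1 | hj1
        · have h2 := (hSmono j ⟨k-1, hk1⟩ (Fin.lt_def.mpr hj1)).1
          have h5 := ((hrectmem _ _ _).mp (hSrect ⟨k-1, hk1⟩)).2.1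
          omega
        · have hj2 : 0 < j.1 := by omega
          have h2 := (hSmono ⟨0, h0k⟩ j (Fin.lt_def.mpr hj2)).2
          have h5 := ((hrectmem _ _ _).mp (hSrect ⟨0, h0k⟩)).2.2.2
          omega
  have hchoice : ∀ j : Fin k, ∃ t : Cell, t ∈ P ∧ t ∈ Rect a b ∧ t.2 = (S j).2 ∧ (S j).1 ≤ t.1 ∧
      ((t = S j ∧ ∀ i, i < k → (S j).1 ≠ (DD i).1) ∨
        (∃ i, i + 1 < k ∧ S j = ((DD i).1, (DD (i+1)).2) ∧ t = DD (i+1))) := by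
    intro j
    rcases hclass j with ⟨hp, hc, hr⟩ | ⟨i, hi, heq⟩
    · exact ⟨S j, hp, hSrect j, rfl, le_refl _, Or.inl ⟨rfl, hc⟩⟩
    · refine ⟨DD (i+1), (hDDP2 (i+1) hi).1, (hDDP2 (i+1) hi).2, ?_, ?_,
        Or.inr ⟨i, hi, heq, rfl⟩⟩
      · rw [heq]
      · rw [heq]
        exact le_of_lt (hDDm i (i+1) (Nat.lt_succ_self i) hi).1
  choose T0 hT0P hT0rect hT0row hT0col hT0case using hchoice
  obtain ⟨TT, hTT⟩ : ∃ TT : ℕ → Cell, ∀ (m : ℕ) (h : m < k), TT m = T0 ⟨m, h⟩ :=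
    ⟨fun m => if h : m < k then T0 ⟨m, h⟩ else (0, 0), fun m h => dif_pos h⟩
  have hTmem : ∀ m, m < k → TT m ∈ P ∧ TT m ∈ Rect a b := fun m h => by
    rw [hTT m h]; exact ⟨hT0P _, hT0rect _⟩
  have hTrow : ∀ (m : ℕ) (h : m < k), (TT m).2 = (S ⟨m, h⟩).2 := fun m h => by
    rw [hTT m h]; exact hT0row _
  have hTcol : ∀ (m : ℕ) (h : m < k), (S ⟨m, h⟩).1 ≤ (TT m).1 := fun m h => by
    rw [hTT m h]; exact hT0col _
  have hTcase : ∀ (m : ℕ) (h : m < k),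
      ((TT m = S ⟨m, h⟩ ∧ ∀ i, i < k → (S ⟨m, h⟩).1 ≠ (DD i).1) ∨
        (∃ i, i + 1 < k ∧ S ⟨m, h⟩ = ((DD i).1, (DD (i+1)).2) ∧ TT m = DD (i+1))) := fun m h => by
    rw [hTT m h]; exact hT0case _
  have hrowdec : ∀ m, m + 1 < k → (TT (m+1)).2 < (TT m).2 := by
    intro m h
    have hmk : m < k := by omega
    rw [hTrow (m+1) h, hTrow m hmk]
    exact (hSmono ⟨m, hmk⟩ ⟨m+1, h⟩ (Fin.lt_def.mpr (Nat.lt_succ_self m))).2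
  have hrowS0 : (S ⟨0, h0k⟩).2 < b := by
    rcases hclass ⟨0, h0k⟩ with ⟨hp, hc, hr⟩ | ⟨i, hi, heq⟩
    · have h1 := ((hrectmem _ _ _).mp (hSrect ⟨0, h0k⟩)).2.2.2
      have h2 := hr 0 h0k
      omega
    · have h1 : (S ⟨0, h0k⟩).2 = (DD (i+1)).2 := by rw [heq]
      have h2 := (hDDm 0 (i+1) (by omega) hi).2
      omega
  have hFB : ∀ (j : ℕ) (hjk : j < k) (hj1 : j + 1 < k),
      ¬ (TT j).1 < (TT (j+1)).1 →
      ∃ i, i + 1 < k ∧ TT j = DD (i+1) ∧ (S ⟨j, hjk⟩).1 = (DD i).1 ∧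
        (DD i).1 < (TT (j+1)).1 ∧ (TT (j+1)).2 < (DD (i+1)).2 := by
    intro j hjk hj1 hcol
    have hmono := hSmono ⟨j, hjk⟩ ⟨j+1, hj1⟩ (Fin.lt_def.mpr (Nat.lt_succ_self j))
    have hmono1 := hmono.1
    have hmono2 := hmono.2
    rcases hTcase j hjk with ⟨he, _⟩ | ⟨i, hi, hSj, hTj⟩
    · exfalso
      apply hcol
      have h3 := hTcol (j+1) hj1
      have h4 : (TT j).1 = (S ⟨j, hjk⟩).1 := by rw [he]
      omega
    · rcases hTcase (j+1) hj1 with ⟨he2, _⟩ | ⟨i', hi', hSj', hTj''⟩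
      · refine ⟨i, hi, hTj, ?_, ?_, ?_⟩
        · rw [hSj]
        · have h1 : (S ⟨j, hjk⟩).1 = (DD i).1 := by rw [hSj]
          have h2 : (TT (j+1)).1 = (S ⟨j+1, hj1⟩).1 := by rw [he2]
          omega
        · have h1 : (S ⟨j, hjk⟩).2 = (DD (i+1)).2 := by rw [hSj]
          have h2 := hTrow (j+1) hj1
          omega
      · exfalso
        apply hcol
        have h1 : (S ⟨j, hjk⟩).1 = (DD i).1 := by rw [hSj]
        have h1' : (S ⟨j+1, hj1⟩).1 = (DD i').1 := by rw [hSj']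
        have hii : i < i' := by
          by_contra hcon
          have h5 := (hDDle i' i (by omega) (by omega)).1
          omega
        have h6 : (TT j).1 = (DD (i+1)).1 := by rw [hTj]
        have h7 : (TT (j+1)).1 = (DD (i'+1)).1 := by rw [hTj'']
        have h8 := (hDDle (i+1) i' (by omega) (by omega)).1
        have h9 := (hDDm i' (i'+1) (Nat.lt_succ_self i') hi').1
        omega
  by_cases hex : ∃ j, j + 1 < k ∧ ¬ (TT j).1 < (TT (j+1)).1
  case neg =>
    have hnb : ∀ j, j + 1 < k → (TT j).1 < (TT (j+1)).1 := by
      intro j h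
      by_contra hc
      exact hex ⟨j, h, hc⟩
    refine seg_false k F P a b hRsub D hmin DD hDDeq hDDP2 hDDm TT 0 0 (k-1) k
      h0k (by omega) (by omega) (le_refl k) (by omega)
      (fun m h1 h2 => hTmem m (by omega))
      (fun m h1 h2 => ⟨hnb m (by omega), hrowdec m (by omega)⟩)
      (fun m hm => absurd hm (Nat.not_lt_zero m))
      (fun hv => absurd hv (lt_irrefl k))
      ?_
    rw [hTrow 0 h0k]
    omega
  case pos =>
    by_cases hgb : ∃ j, (j + 1 < k ∧ ¬ (TT j).1 < (TT (j+1)).1) ∧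
        ∃ i, i + 1 < k ∧ TT j = DD (i+1) ∧ j ≤ i
    case pos =>
      obtain ⟨j0, hj0⟩ := hgb
      have hJne : ((Finset.range k).filter (fun j => (j + 1 < k ∧ ¬ (TT j).1 < (TT (j+1)).1) ∧
          ∃ i, i + 1 < k ∧ TT j = DD (i+1) ∧ j ≤ i)).Nonempty :=
        ⟨j0, Finset.mem_filter.mpr ⟨Finset.mem_range.mpr (by have := hj0.1.1; omega), hj0⟩⟩
      set js := ((Finset.range k).filter (fun j => (j + 1 < k ∧ ¬ (TT j).1 < (TT (j+1)).1) ∧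
          ∃ i, i + 1 < k ∧ TT j = DD (i+1) ∧ j ≤ i)).max' hJne with hjsdef
      have hjsmem : js ∈ ((Finset.range k).filter
          (fun j => (j + 1 < k ∧ ¬ (TT j).1 < (TT (j+1)).1) ∧
          ∃ i, i + 1 < k ∧ TT j = DD (i+1) ∧ j ≤ i)) := Finset.max'_mem _ hJne
      obtain ⟨⟨hjs1, hjs2⟩, i0, hi0, hTj0, hj0i⟩ := (Finset.mem_filter.mp hjsmem).2
      have hjsk : js < k := by omega
      obtain ⟨istar, histar, hTjs, hSjs, hlow, hrow⟩ := hFB js hjsk hjs1 hjs2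
      have hieq : istar = i0 := by
        have h1 : (DD (istar+1)).1 = (DD (i0+1)).1 := by rw [← hTjs, hTj0]
        by_contra hne
        rcases Nat.lt_or_ge istar i0 with h | h
        · have := (hDDm (istar+1) (i0+1) (by omega) hi0).1; omega
        · have := (hDDm (i0+1) (istar+1) (by omega) histar).1; omega
      have hjsi : js ≤ istar := by omega
      by_cases haft : ∃ j', (js < j' ∧ j' + 1 < k) ∧ ¬ (TT j').1 < (TT (j'+1)).1
      case pos =>
        have hj'spec := Nat.find_spec haft
        set j' := Nat.find haft with hj'def
        obtain ⟨⟨hjj1, hjj2⟩, hjj3⟩ := hj'spec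
        have hj'k : j' < k := by omega
        obtain ⟨i', hi', hTj', hSj', hlow', hrow'⟩ := hFB j' hj'k hjj2 hjj3
        have hi'j : i' < j' := by
          by_contra hcon
          have hmemJ : j' ∈ ((Finset.range k).filter
              (fun j => (j + 1 < k ∧ ¬ (TT j).1 < (TT (j+1)).1) ∧
              ∃ i, i + 1 < k ∧ TT j = DD (i+1) ∧ j ≤ i)) :=
            Finset.mem_filter.mpr ⟨Finset.mem_range.mpr hj'k, ⟨hjj2, hjj3⟩, i', hi', hTj',
              by omega⟩
          have h2 : j' ≤ js := Finset.le_max' _ j' hmemJ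
          omega
        have hii : istar < i' := by
          by_contra hcon
          have h1 := (hDDle i' istar (by omega) (by omega)).1
          have h2 := (hSmono ⟨js, hjsk⟩ ⟨j', hj'k⟩ (Fin.lt_def.mpr hjj1)).1
          omega
        refine seg_false k F P a b hRsub D hmin DD hDDeq hDDP2 hDDm TT
          (istar+1) (js+1) j' (i'+2) histar (by omega) (by omega) (by omega) (by omega)
          (fun m h1 h2 => hTmem m (by omega))
          ?_ ?_ ?_ hrow
        · intro m h1 h2
          refine ⟨?_, hrowdec m (by omega)⟩
          by_contra hc
          exact Nat.find_min haft (show m < j' by omega) ⟨⟨by omega, by omega⟩, hc⟩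
        · intro m hm
          have h1 := (hDDle m istar (by omega) (by omega)).1
          have h2 := (hDDm m (istar+1) (by omega) histar).2
          exact ⟨by omega, by omega⟩
        · intro hv
          have h3 : (TT j').1 = (DD (i'+1)).1 := by rw [hTj']
          have h4 : (TT j').2 = (DD (i'+1)).2 := by rw [hTj']
          have h5 := (hDDm (i'+1) (i'+2) (by omega) hv).1
          have h6 := (hDDm (i'+1) (i'+2) (by omega) hv).2
          exact ⟨by omega, by omega⟩
      case neg =>
        have hnb : ∀ m, js < m → m + 1 < k → (TT m).1 < (TT (m+1)).1 := by
          intro m h1 h2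
          by_contra hc
          exact haft ⟨m, ⟨h1, h2⟩, hc⟩
        refine seg_false k F P a b hRsub D hmin DD hDDeq hDDP2 hDDm TT
          (istar+1) (js+1) (k-1) k histar (by omega) (by omega) (le_refl k) (by omega)
          (fun m h1 h2 => hTmem m (by omega))
          (fun m h1 h2 => ⟨hnb m (by omega) (by omega), hrowdec m (by omega)⟩)
          ?_ (fun hv => absurd hv (lt_irrefl k)) hrow
        intro m hm
        have h1 := (hDDle m istar (by omega) (by omega)).1
        have h2 := (hDDm m (istar+1) (by omega) histar).2
        exact ⟨by omega, by omega⟩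
    case neg =>
      have hj1spec := Nat.find_spec hex
      set j1 := Nat.find hex with hj1def
      obtain ⟨hb1, hb2'⟩ := hj1spec
      have hj1k : j1 < k := by omega
      obtain ⟨i1, hi1, hTj1, hSj1, hlow1, hrow1⟩ := hFB j1 hj1k hb1 hb2'
      have hi1j : i1 < j1 := by
        by_contra hcon
        exact hgb ⟨j1, ⟨hb1, hb2'⟩, i1, hi1, hTj1, by omega⟩
      refine seg_false k F P a b hRsub D hmin DD hDDeq hDDP2 hDDm TT
        0 0 j1 (i1+2) h0k (by omega) (by omega) (by omega) (by omega)
        (fun m h1 h2 => hTmem m (by omega))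
        ?_ (fun m hm => absurd hm (Nat.not_lt_zero m)) ?_ ?_
      · intro m h1 h2
        refine ⟨?_, hrowdec m (by omega)⟩
        by_contra hc
        exact Nat.find_min hex (show m < j1 by omega) ⟨by omega, hc⟩
      · intro hv
        have h3 : (TT j1).1 = (DD (i1+1)).1 := by rw [hTj1]
        have h4 : (TT j1).2 = (DD (i1+1)).2 := by rw [hTj1]
        have h5 := (hDDm (i1+1) (i1+2) (by omega) hv).1
        have h6 := (hDDm (i1+1) (i1+2) (by omega) hv).2
        exact ⟨by omega, by omega⟩
      · rw [hTrow 0 h0k]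
        omega
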